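/- Let r₁, r₂ > 0. Then λ₁(ε) ∼ 1 as ε → 0⁺; that is, there exist constants 0 < m ≤ M and ε₀ > 0 such that m ≤ λ₁(ε) ≤ M for all 0 < ε < ε₀. -/

import Mathlib

open Real Filter Topology

/-- Half-distance between the fixed points of the composed reflections. -/
noncomputable def alphaBi (r₁ r₂ ε : ℝ) : ℝ :=
  Real.sqrt (ε * (2 * r₁ + ε) * (2 * r₂ + ε) * (2 * r₁ + 2 * r₂ + ε)) /
    (2 * (r₁ + r₂ + ε))

/-- Bispherical coordinate of the boundary of the first sphere. -/
noncomputable def xi1 (r₁ r₂ ε : ℝ) : ℝ := Real.arsinh (alphaBi r₁ r₂ ε / r₁)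

/-- Bispherical coordinate of the boundary of the second sphere. -/
noncomputable def xi2 (r₁ r₂ ε : ℝ) : ℝ := Real.arsinh (alphaBi r₁ r₂ ε / r₂)

/-- Capacitance coefficient C₁₁. -/
noncomputable def C11 (r₁ r₂ ε : ℝ) : ℝ :=
  8 * π * alphaBi r₁ r₂ ε *
    ∑' n : ℕ, Real.exp ((2 * n + 1) * xi2 r₁ r₂ ε) /
      (Real.exp ((2 * n + 1) * (xi1 r₁ r₂ ε + xi2 r₁ r₂ ε)) - 1)

/-- Capacitance coefficient C₂₂. -/
noncomputable def C22 (r₁ r₂ ε : ℝ) : ℝ :=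
  8 * π * alphaBi r₁ r₂ ε *
    ∑' n : ℕ, Real.exp ((2 * n + 1) * xi1 r₁ r₂ ε) /
      (Real.exp ((2 * n + 1) * (xi1 r₁ r₂ ε + xi2 r₁ r₂ ε)) - 1)

/-- Capacitance coefficient C₁₂. -/
noncomputable def C12 (r₁ r₂ ε : ℝ) : ℝ :=
  -(8 * π * alphaBi r₁ r₂ ε *
    ∑' n : ℕ, 1 / (Real.exp ((2 * n + 1) * (xi1 r₁ r₂ ε + xi2 r₁ r₂ ε)) - 1))

/-- Capacitance coefficient C₂₁. -/
noncomputable def C21 (r₁ r₂ ε : ℝ) : ℝ := C12 r₁ r₂ ε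

/-- Rescaled capacitance coefficient C̃₁₁ = (3/(4π r₁³)) C₁₁. -/
noncomputable def Ct11 (r₁ r₂ ε : ℝ) : ℝ := 3 / (4 * π * r₁ ^ 3) * C11 r₁ r₂ ε

/-- Rescaled capacitance coefficient C̃₂₂ = (3/(4π r₂³)) C₂₂. -/
noncomputable def Ct22 (r₁ r₂ ε : ℝ) : ℝ := 3 / (4 * π * r₂ ^ 3) * C22 r₁ r₂ ε

/-- Rescaled capacitance coefficient C̃₁₂ = (3/(4π r₁³)) C₁₂. -/
noncomputable def Ct12 (r₁ r₂ ε : ℝ) : ℝ := 3 / (4 * π * r₁ ^ 3) * C12 r₁ r₂ ε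

/-- Rescaled capacitance coefficient C̃₂₁ = (3/(4π r₂³)) C₂₁. -/
noncomputable def Ct21 (r₁ r₂ ε : ℝ) : ℝ := 3 / (4 * π * r₂ ^ 3) * C21 r₁ r₂ ε

/-- Smaller eigenvalue of the rescaled capacitance matrix. -/
noncomputable def lam1 (r₁ r₂ ε : ℝ) : ℝ :=
  1 / 2 * (Ct11 r₁ r₂ ε + Ct22 r₁ r₂ ε -
    Real.sqrt ((Ct11 r₁ r₂ ε - Ct22 r₁ r₂ ε) ^ 2 + 4 * Ct12 r₁ r₂ ε * Ct21 r₁ r₂ ε))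

/-- Larger eigenvalue of the rescaled capacitance matrix. -/
noncomputable def lam2 (r₁ r₂ ε : ℝ) : ℝ :=
  1 / 2 * (Ct11 r₁ r₂ ε + Ct22 r₁ r₂ ε +
    Real.sqrt ((Ct11 r₁ r₂ ε - Ct22 r₁ r₂ ε) ^ 2 + 4 * Ct12 r₁ r₂ ε * Ct21 r₁ r₂ ε))

/-!
Write `kᵢ = 3/(4π rᵢ³)`, `S = -C₁₂ ≥ 0`, `A = C₁₁ + C₁₂`, `B = C₂₂ + C₁₂`. Then `λ₁` is the smaller
eigenvalue of `[[k₁(S+A), -k₁S], [-k₂S, k₂(S+B)]]`, and the sign of its characteristic polynomial at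
`min (k₁A) (k₂B)` and at `k₁k₂(A+B)/(k₁+k₂)` traps `λ₁` between these two values whatever `S` is
(`S` blows up as `ε → 0`). Comparing the series termwise with `∑ e^{-(2n+1)c} = 1/(2 sinh c)` gives
`A ≤ 4πr₁`, because `sinh ξ₁ = α/r₁`, and `A ≳ α² e^{-2s}/s²` with `s = ξ₁ + ξ₂ ≤ α(1/r₁ + 1/r₂)`;
so `A` and `B` stay between positive constants once `α ≤ 1`, which holds for small `ε` since
`α → 0`.
-/

-- The smaller root of `u² - (a + d) u + (a d - b c)`, the characteristic polynomial of
-- `[[a, b], [c, d]]`.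
noncomputable def eigMin (a b c d : ℝ) : ℝ :=
  1 / 2 * (a + d - √((a - d) ^ 2 + 4 * b * c))

theorem le_eigMin {a b c d u : ℝ} (hu : 2 * u ≤ a + d) (hchar : b * c ≤ (a - u) * (d - u)) :
    u ≤ eigMin a b c d := by
  have : √((a - d) ^ 2 + 4 * b * c) ≤ a + d - 2 * u :=
    Real.sqrt_le_iff.mpr ⟨by linarith, by nlinarith⟩
  unfold eigMin
  linarith

theorem eigMin_le {a b c d u : ℝ} (hchar : (a - u) * (d - u) ≤ b * c) :
    eigMin a b c d ≤ u := by
  have : a + d - 2 * u ≤ √((a - d) ^ 2 + 4 * b * c) :=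
    (le_abs_self _).trans (Real.abs_le_sqrt (by nlinarith))
  unfold eigMin
  linarith

section Coupled

variable {k₁ k₂ S A B : ℝ}

theorem min_le_eigMin_coupled (hk₁ : 0 ≤ k₁) (hk₂ : 0 ≤ k₂) (hS : 0 ≤ S) :
    min (k₁ * A) (k₂ * B) ≤ eigMin (k₁ * (S + A)) (-(k₁ * S)) (-(k₂ * S)) (k₂ * (S + B)) := by
  have hA := min_le_left (k₁ * A) (k₂ * B)
  have hB := min_le_right (k₁ * A) (k₂ * B)
  apply le_eigMin
  · nlinarith [mul_nonneg hk₁ hS, mul_nonneg hk₂ hS]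
  · calc -(k₁ * S) * -(k₂ * S) = (k₁ * S) * (k₂ * S) := by ring
      _ ≤ _ := mul_le_mul (by linarith) (by linarith) (mul_nonneg hk₂ hS)
          (by nlinarith [mul_nonneg hk₁ hS])

theorem eigMin_coupled_le (hk₁ : 0 < k₁) (hk₂ : 0 < k₂) :
    eigMin (k₁ * (S + A)) (-(k₁ * S)) (-(k₂ * S)) (k₂ * (S + B)) ≤
      k₁ * k₂ * (A + B) / (k₁ + k₂) := by
  apply eigMin_le
  have hchar : (k₁ * (S + A) - k₁ * k₂ * (A + B) / (k₁ + k₂)) *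
      (k₂ * (S + B) - k₁ * k₂ * (A + B) / (k₁ + k₂)) - -(k₁ * S) * -(k₂ * S) =
      -(k₁ * k₂ * ((k₁ * A - k₂ * B) / (k₁ + k₂)) ^ 2) := by
    field_simp
    ring
  nlinarith [mul_nonneg (mul_pos hk₁ hk₂).le (sq_nonneg ((k₁ * A - k₂ * B) / (k₁ + k₂)))]

end Coupled

theorem exp_sub_one_le_mul_exp (x : ℝ) : exp x - 1 ≤ x * exp x := by
  have h := Real.add_one_le_exp (-x)
  have : exp (-x) * exp x = 1 := by rw [← Real.exp_add, neg_add_cancel, Real.exp_zero]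
  nlinarith [Real.exp_pos x]

theorem sinh_le_mul_exp (x : ℝ) : sinh x ≤ x * exp x := by
  have h := Real.add_one_le_exp (-(2 * x))
  have : exp x * exp (-(2 * x)) = exp (-x) := by rw [← Real.exp_add]; ring_nf
  rw [Real.sinh_eq]
  nlinarith [Real.exp_pos x]

theorem hasSum_exp_neg_odd_mul {c : ℝ} (hc : 0 < c) :
    HasSum (fun n : ℕ => exp (-((2 * n + 1) * c))) (1 / (2 * sinh c)) := by
  have hq : exp (-(2 * c)) < 1 := Real.exp_lt_one_iff.mpr (by linarith)
  have hterm : (fun n : ℕ => exp (-((2 * n + 1) * c))) =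
      fun n : ℕ => exp (-c) * exp (-(2 * c)) ^ n := by
    funext n
    rw [← Real.exp_nat_mul, ← Real.exp_add]
    ring_nf
  have hsinh : 2 * sinh c = exp c * (1 - exp (-(2 * c))) := by
    rw [Real.sinh_eq, mul_sub, ← Real.exp_add]
    ring_nf
  rw [hterm, hsinh, Real.exp_neg c, one_div, mul_inv]
  exact (hasSum_geometric_of_lt_one (Real.exp_pos _).le hq).mul_left _

theorem exp_sub_one_div_exp_sub_one_le {u v : ℝ} (huv : u ≤ v) (hv : 0 < v) :
    (exp u - 1) / (exp v - 1) ≤ exp (u - v) := by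
  have hden : 0 < exp v - 1 := by linarith [Real.add_one_le_exp v]
  have hexp : exp (u - v) * (exp v - 1) = exp u - exp (u - v) := by
    rw [mul_sub, mul_one, ← Real.exp_add, sub_add_cancel]
  rw [div_le_iff₀ hden, hexp]
  linarith [Real.exp_le_one_iff.mpr (sub_nonpos.mpr huv)]

theorem div_mul_exp_neg_le_exp_sub_one_div {u v : ℝ} (hu : 0 ≤ u) (hv : 0 < v) :
    u / v * exp (-v) ≤ (exp u - 1) / (exp v - 1) := by
  have hden : 0 < exp v - 1 := by linarith [Real.add_one_le_exp v]
  rw [Real.exp_neg, ← div_eq_mul_inv, div_div]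
  exact div_le_div₀ (by linarith [Real.add_one_le_exp u]) (by linarith [Real.add_one_le_exp u])
    hden (exp_sub_one_le_mul_exp v)

-- `C₁₂ = -8πα · mutualSeries (ξ₁ + ξ₂)` and
-- `C₁₁ = 8πα (mutualSeries (ξ₁ + ξ₂) + selfSeries ξ₂ (ξ₁ + ξ₂))`.
noncomputable def mutualSeries (s : ℝ) : ℝ :=
  ∑' n : ℕ, 1 / (exp ((2 * n + 1) * s) - 1)

noncomputable def selfSeries (y s : ℝ) : ℝ :=
  ∑' n : ℕ, (exp ((2 * n + 1) * y) - 1) / (exp ((2 * n + 1) * s) - 1)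

section Series

variable {y s : ℝ}

theorem exp_odd_mul_sub_one_pos (hs : 0 < s) (n : ℕ) : 0 < exp ((2 * n + 1) * s) - 1 := by
  have : 0 < (2 * n + 1 : ℝ) * s := by positivity
  linarith [Real.add_one_le_exp ((2 * n + 1 : ℝ) * s)]

theorem mutualSeries_nonneg (hs : 0 < s) : 0 ≤ mutualSeries s :=
  tsum_nonneg fun n => (one_div_pos.mpr (exp_odd_mul_sub_one_pos hs n)).le

theorem summable_mutualSeries (hs : 0 < s) :
    Summable fun n : ℕ => 1 / (exp ((2 * n + 1) * s) - 1) := by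
  have hs1 : 0 < exp s - 1 := by linarith [Real.add_one_le_exp s]
  refine Summable.of_nonneg_of_le (fun n => (one_div_pos.mpr (exp_odd_mul_sub_one_pos hs n)).le)
    (fun n => ?_) ((hasSum_exp_neg_odd_mul hs).summable.mul_left (exp s / (exp s - 1)))
  have hv : s ≤ (2 * n + 1) * s :=
    le_mul_of_one_le_left hs.le (by linarith [n.cast_nonneg (α := ℝ)])
  have h := exp_sub_one_div_exp_sub_one_le hv (by positivity)
  have heq : exp s / (exp s - 1) * exp (-((2 * n + 1) * s)) =
      exp (s - (2 * n + 1) * s) / (exp s - 1) := by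
    rw [Real.exp_sub, Real.exp_neg]
    ring
  rw [div_le_iff₀ (exp_odd_mul_sub_one_pos hs n)] at h
  rw [heq, div_le_div_iff₀ (exp_odd_mul_sub_one_pos hs n) hs1]
  linarith

theorem selfSeries_term_le (hy : 0 ≤ y) (hys : y < s) (n : ℕ) :
    (exp ((2 * n + 1) * y) - 1) / (exp ((2 * n + 1) * s) - 1) ≤
      exp (-((2 * n + 1) * (s - y))) := by
  rw [show -((2 * n + 1) * (s - y)) = (2 * n + 1 : ℝ) * y - (2 * n + 1) * s by ring]
  exact exp_sub_one_div_exp_sub_one_le (by nlinarith) (by nlinarith)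

theorem selfSeries_term_nonneg (hy : 0 ≤ y) (hys : y < s) (n : ℕ) :
    0 ≤ (exp ((2 * n + 1) * y) - 1) / (exp ((2 * n + 1) * s) - 1) :=
  have hk : (0 : ℝ) ≤ 2 * n + 1 := by positivity
  div_nonneg (by linarith [Real.add_one_le_exp ((2 * n + 1 : ℝ) * y), mul_nonneg hk hy])
    (exp_odd_mul_sub_one_pos (hy.trans_lt hys) n).le

theorem summable_selfSeries (hy : 0 ≤ y) (hys : y < s) :
    Summable fun n : ℕ => (exp ((2 * n + 1) * y) - 1) / (exp ((2 * n + 1) * s) - 1) :=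
  Summable.of_nonneg_of_le (selfSeries_term_nonneg hy hys) (selfSeries_term_le hy hys)
    (hasSum_exp_neg_odd_mul (sub_pos.mpr hys)).summable

theorem selfSeries_le (hy : 0 ≤ y) (hys : y < s) : selfSeries y s ≤ 1 / (2 * sinh (s - y)) := by
  have hgeom := hasSum_exp_neg_odd_mul (sub_pos.mpr hys)
  rw [← hgeom.tsum_eq]
  exact (summable_selfSeries hy hys).tsum_le_tsum (selfSeries_term_le hy hys) hgeom.summable

theorem le_selfSeries (hy : 0 ≤ y) (hys : y < s) :
    sinh y * exp (-(2 * s)) / (2 * s ^ 2) ≤ selfSeries y s := by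
  have hs : 0 < s := hy.trans_lt hys
  have hgeom := (hasSum_exp_neg_odd_mul hs).mul_left (y / s)
  have hterm (n : ℕ) : y / s * exp (-((2 * n + 1) * s)) ≤
      (exp ((2 * n + 1) * y) - 1) / (exp ((2 * n + 1) * s) - 1) := by
    have h := div_mul_exp_neg_le_exp_sub_one_div (u := (2 * n + 1) * y)
      (mul_nonneg (by positivity) hy) (by positivity : (0 : ℝ) < (2 * n + 1) * s)
    rwa [mul_div_mul_left _ _ (by positivity)] at h
  have hsinh_y : sinh y * exp (-(2 * s)) ≤ y * exp (-s) := by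
    calc sinh y * exp (-(2 * s)) ≤ y * exp s * exp (-(2 * s)) :=
          mul_le_mul_of_nonneg_right ((sinh_le_mul_exp y).trans
            (mul_le_mul_of_nonneg_left (Real.exp_le_exp.mpr hys.le) hy)) (Real.exp_pos _).le
      _ = y * exp (-s) := by rw [mul_assoc, ← Real.exp_add]; ring_nf
  calc sinh y * exp (-(2 * s)) / (2 * s ^ 2) ≤ y * exp (-s) / (2 * s ^ 2) := by gcongr
    _ = y / s / (2 * (s * exp s)) := by rw [Real.exp_neg]; field_simp
    _ ≤ y / s * (1 / (2 * sinh s)) := by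
      rw [← div_eq_mul_one_div]
      exact div_le_div_of_nonneg_left (by positivity) (mul_pos two_pos (Real.sinh_pos_iff.mpr hs))
        (by linarith [sinh_le_mul_exp s])
    _ ≤ selfSeries y s := hgeom.tsum_eq.symm.trans_le
        (hgeom.summable.tsum_le_tsum hterm (summable_selfSeries hy hys))

theorem tsum_exp_div_exp_sub_one (hy : 0 ≤ y) (hys : y < s) :
    ∑' n : ℕ, exp ((2 * n + 1) * y) / (exp ((2 * n + 1) * s) - 1) =
      mutualSeries s + selfSeries y s := by
  rw [mutualSeries, selfSeries,
    ← (summable_mutualSeries (hy.trans_lt hys)).tsum_add (summable_selfSeries hy hys)]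
  congr 1 with n
  rw [← add_div, add_sub_cancel]

end Series

section Capacitance

variable {r r' α : ℝ}

theorem eight_pi_mul_selfSeries_le (hr : 0 < r) (hr' : 0 < r') (hα : 0 < α) :
    8 * π * α * selfSeries (arsinh (α / r')) (arsinh (α / r) + arsinh (α / r')) ≤ 4 * π * r := by
  have hξ' : 0 ≤ arsinh (α / r') := arsinh_nonneg_iff.mpr (by positivity)
  have hξ : 0 < arsinh (α / r) := arsinh_pos_iff.mpr (by positivity)
  have h := selfSeries_le hξ' (lt_add_of_pos_left _ hξ)
  rw [add_sub_cancel_right, sinh_arsinh] at h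
  calc 8 * π * α * selfSeries (arsinh (α / r')) (arsinh (α / r) + arsinh (α / r'))
      ≤ 8 * π * α * (1 / (2 * (α / r))) := by gcongr
    _ = 4 * π * r := by field_simp; ring

theorem exists_pos_le_eight_pi_mul_selfSeries (hr : 0 < r) (hr' : 0 < r') :
    ∃ c > 0, ∀ α, 0 < α → α ≤ 1 →
      c ≤ 8 * π * α * selfSeries (arsinh (α / r')) (arsinh (α / r) + arsinh (α / r')) := by
  set σ := 1 / r + 1 / r'
  refine ⟨4 * π * exp (-(2 * σ)) / (r' * σ ^ 2), by positivity, fun α hα hα1 => ?_⟩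
  set ξ := arsinh (α / r)
  set ξ' := arsinh (α / r')
  have hξ : 0 < ξ := arsinh_pos_iff.mpr (by positivity)
  have hξ' : 0 < ξ' := arsinh_pos_iff.mpr (by positivity)
  have hξle : ξ ≤ α / r := (self_le_sinh_iff.mpr hξ.le).trans_eq (sinh_arsinh _)
  have hξ'le : ξ' ≤ α / r' := (self_le_sinh_iff.mpr hξ'.le).trans_eq (sinh_arsinh _)
  have hsσα : ξ + ξ' ≤ σ * α :=
    calc ξ + ξ' ≤ α / r + α / r' := add_le_add hξle hξ'le
      _ = σ * α := by ring
  have hsσ : ξ + ξ' ≤ σ := hsσα.trans (mul_le_of_le_one_right (by positivity) hα1)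
  have hD := le_selfSeries hξ'.le (lt_add_of_pos_left ξ' hξ)
  rw [sinh_arsinh] at hD
  calc 4 * π * exp (-(2 * σ)) / (r' * σ ^ 2)
      ≤ 4 * π * exp (-(2 * (ξ + ξ'))) / (r' * ((ξ + ξ') / α) ^ 2) := by
        gcongr
        exact (div_le_iff₀ hα).mpr hsσα
    _ = 8 * π * α * (α / r' * exp (-(2 * (ξ + ξ'))) / (2 * (ξ + ξ') ^ 2)) := by
        field_simp
        norm_num
    _ ≤ 8 * π * α * selfSeries ξ' (ξ + ξ') := by gcongr

end Capacitance

section Bispherical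

variable {r₁ r₂ ε : ℝ}

theorem alphaBi_pos (hr₁ : 0 < r₁) (hr₂ : 0 < r₂) (hε : 0 < ε) : 0 < alphaBi r₁ r₂ ε := by
  unfold alphaBi
  positivity

theorem tendsto_alphaBi_nhds_zero (hr : r₁ + r₂ ≠ 0) :
    Tendsto (alphaBi r₁ r₂) (𝓝 0) (𝓝 0) := by
  have hcont : ContinuousAt (alphaBi r₁ r₂) 0 := by
    unfold alphaBi
    exact ContinuousAt.div (by fun_prop) (by fun_prop) (by simpa using hr)
  simpa [alphaBi] using hcont.tendsto

theorem exists_bounds_lam1_of_alphaBi_le_one (hr₁ : 0 < r₁) (hr₂ : 0 < r₂) :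
    ∃ m > 0, ∃ M, ∀ ε, 0 < alphaBi r₁ r₂ ε → alphaBi r₁ r₂ ε ≤ 1 →
      m ≤ lam1 r₁ r₂ ε ∧ lam1 r₁ r₂ ε ≤ M := by
  obtain ⟨c₁, hc₁, hA⟩ := exists_pos_le_eight_pi_mul_selfSeries hr₁ hr₂
  obtain ⟨c₂, hc₂, hB⟩ := exists_pos_le_eight_pi_mul_selfSeries hr₂ hr₁
  set k₁ := 3 / (4 * π * r₁ ^ 3)
  set k₂ := 3 / (4 * π * r₂ ^ 3)
  have hk₁ : 0 < k₁ := by positivity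
  have hk₂ : 0 < k₂ := by positivity
  refine ⟨min (k₁ * c₁) (k₂ * c₂), by positivity,
    k₁ * k₂ * (4 * π * r₁ + 4 * π * r₂) / (k₁ + k₂), fun ε hα hα1 => ?_⟩
  set α := alphaBi r₁ r₂ ε
  set ξ₁ := xi1 r₁ r₂ ε
  set ξ₂ := xi2 r₁ r₂ ε
  have hξ₁ : 0 < ξ₁ := arsinh_pos_iff.mpr (div_pos hα hr₁)
  have hξ₂ : 0 < ξ₂ := arsinh_pos_iff.mpr (div_pos hα hr₂)
  set S := 8 * π * α * mutualSeries (ξ₁ + ξ₂)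
  set A := 8 * π * α * selfSeries ξ₂ (ξ₁ + ξ₂)
  set B := 8 * π * α * selfSeries ξ₁ (ξ₁ + ξ₂)
  have hlam : lam1 r₁ r₂ ε = eigMin (k₁ * (S + A)) (-(k₁ * S)) (-(k₂ * S)) (k₂ * (S + B)) := by
    rw [show lam1 r₁ r₂ ε = eigMin (Ct11 r₁ r₂ ε) (Ct12 r₁ r₂ ε) (Ct21 r₁ r₂ ε) (Ct22 r₁ r₂ ε)
      from rfl]
    congr 1
    · rw [Ct11, C11, tsum_exp_div_exp_sub_one hξ₂.le (lt_add_of_pos_left ξ₂ hξ₁), mul_add]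
    · exact mul_neg k₁ S
    · exact mul_neg k₂ S
    · rw [Ct22, C22, tsum_exp_div_exp_sub_one hξ₁.le (lt_add_of_pos_right ξ₁ hξ₂), mul_add]
  have hBcomm : B = 8 * π * α * selfSeries ξ₁ (ξ₂ + ξ₁) := by rw [add_comm ξ₂]
  have hS : 0 ≤ S := mul_nonneg (by positivity) (mutualSeries_nonneg (by positivity))
  rw [hlam]
  constructor
  · refine le_trans ?_ (min_le_eigMin_coupled hk₁.le hk₂.le hS)
    exact min_le_min (by gcongr; exact hA α hα hα1) (by gcongr; rw [hBcomm]; exact hB α hα hα1)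
  · refine (eigMin_coupled_le hk₁ hk₂).trans ?_
    have hAle : A ≤ 4 * π * r₁ := eight_pi_mul_selfSeries_le hr₁ hr₂ hα
    have hBle : B ≤ 4 * π * r₂ := hBcomm ▸ eight_pi_mul_selfSeries_le hr₂ hr₁ hα
    gcongr

end Bispherical

theorem lam1_bounded_above_below (r₁ r₂ : ℝ) (hr₁ : 0 < r₁) (hr₂ : 0 < r₂) :
    ∃ m M ε₀ : ℝ, 0 < m ∧ m ≤ M ∧ 0 < ε₀ ∧
      ∀ ε : ℝ, 0 < ε → ε < ε₀ → m ≤ lam1 r₁ r₂ ε ∧ lam1 r₁ r₂ ε ≤ M := by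
  obtain ⟨m, hm, M, hbounds⟩ := exists_bounds_lam1_of_alphaBi_le_one hr₁ hr₂
  obtain ⟨ε₀, hε₀, hsmall⟩ :=
    Metric.tendsto_nhds_nhds.mp (tendsto_alphaBi_nhds_zero (add_pos hr₁ hr₂).ne') 1 one_pos
  have hlam (ε : ℝ) (hε : 0 < ε) (hεε₀ : ε < ε₀) : m ≤ lam1 r₁ r₂ ε ∧ lam1 r₁ r₂ ε ≤ M := by
    have hα := hsmall (by rwa [Real.dist_0_eq_abs, abs_of_pos hε])
    rw [Real.dist_0_eq_abs] at hα
    exact hbounds ε (alphaBi_pos hr₁ hr₂ hε) ((le_abs_self _).trans hα.le)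
  obtain ⟨hm_le, hle_M⟩ := hlam (ε₀ / 2) (by positivity) (by linarith)
  exact ⟨m, M, ε₀, hm, hm_le.trans hle_M, hε₀, hlam⟩
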